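/- Let Q, A, S_e, S_d, X, Y be finite random variables with joint law P_Q·P_{A|Q}·P_{S_e,S_d|A}·P_{X|A,S_e,Q}·P_{Y|X,S_e,S_d}. Then I(A,X; Y,S_d | Q) − I(X; S_e | A, Q) ≤ I(A,X; Y,S_d) − I(X; S_e | A), where the unconditioned quantities are computed for the marginal of (A,S_e,S_d,X,Y). -/

import Mathlib

open Finset
noncomputable section
namespace IT

variable {Ω : Type} [Fintype Ω]

/-- Marginal probability mass of the event `X = a` under the weight function `p`. -/
def marg {α : Type} [Fintype α] [DecidableEq α]
    (p : Ω → ℝ) (X : Ω → α) (a : α) : ℝ :=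
  ∑ ω, if X ω = a then p ω else 0

/-- Shannon entropy (natural logarithm) of the random variable `X`. -/
def ent {α : Type} [Fintype α] [DecidableEq α] (p : Ω → ℝ) (X : Ω → α) : ℝ :=
  ∑ a, Real.negMulLog (marg p X a)

/-- Conditional entropy `H(X | Y)`. -/
def condEnt {α β : Type} [Fintype α] [DecidableEq α] [Fintype β] [DecidableEq β]
    (p : Ω → ℝ) (X : Ω → α) (Y : Ω → β) : ℝ :=
  ent p (fun ω => (X ω, Y ω)) - ent p Y

/-- Mutual information `I(X; Y)`. -/
def mi {α β : Type} [Fintype α] [DecidableEq α] [Fintype β] [DecidableEq β]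
    (p : Ω → ℝ) (X : Ω → α) (Y : Ω → β) : ℝ :=
  ent p X + ent p Y - ent p (fun ω => (X ω, Y ω))

/-- Conditional mutual information `I(X; Y | Z)`. -/
def condMI {α β γ : Type} [Fintype α] [DecidableEq α] [Fintype β] [DecidableEq β]
    [Fintype γ] [DecidableEq γ]
    (p : Ω → ℝ) (X : Ω → α) (Y : Ω → β) (Z : Ω → γ) : ℝ :=
  condEnt p X Z + condEnt p Y Z - condEnt p (fun ω => (X ω, Y ω)) Z

/-- `X` and `Y` are conditionally independent given `Z`:
`P(X=a, Z=c) ⬝ P(Y=b, Z=c) = P(X=a, Y=b, Z=c) ⬝ P(Z=c)`. -/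
def CondIndep {α β γ : Type} [Fintype α] [DecidableEq α] [Fintype β] [DecidableEq β]
    [Fintype γ] [DecidableEq γ]
    (p : Ω → ℝ) (X : Ω → α) (Y : Ω → β) (Z : Ω → γ) : Prop :=
  ∀ a b c,
    marg p (fun ω => (X ω, Z ω)) (a, c) * marg p (fun ω => (Y ω, Z ω)) (b, c) =
    marg p (fun ω => (X ω, Y ω, Z ω)) (a, b, c) * marg p Z c

/-- `p` is a probability mass function on `Ω`. -/
def IsProb (p : Ω → ℝ) : Prop := (∀ ω, 0 ≤ p ω) ∧ ∑ ω, p ω = 1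

end IT

/-!
Write `W = (A, X)` and `V = (Y, S_d)`. Rearranged, the claim compares `I(W;V|Q) - I(W;V)` with
`I(X;S_e|A,Q) - I(X;S_e|A)`. Both are interaction informations, which are symmetric:
`I(W;V|Q) - I(W;V) = I(Q;V|W) - I(Q;V)` and
`I(X;S_e|A,Q) - I(X;S_e|A) = I(Q;S_e|A,X) - I(Q;S_e|A)`.
The Markov chains make `I(Q;S_e|A)` and `I(Q;V|S_e,A,X)` vanish, so expanding `I(Q;V,S_e|W)` by
the chain rule in both orders gives `I(Q;V|W) ≤ I(Q;S_e|W)`. Hence the left side exceeds the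
right side by at most `-I(Q;V) ≤ 0`.
-/

namespace IT

open Real

variable {Ω α β γ δ ε : Type} [Fintype Ω] [Fintype α] [DecidableEq α] [Fintype β]
  [DecidableEq β] [Fintype γ] [DecidableEq γ] [Fintype δ] [DecidableEq δ] [Fintype ε]
  [DecidableEq ε]

section Marginals

variable (p : Ω → ℝ)

lemma marg_nonneg {p : Ω → ℝ} (hp : ∀ ω, 0 ≤ p ω) (X : Ω → α) (a : α) : 0 ≤ marg p X a :=
  Finset.sum_nonneg fun ω _ => by split_ifs <;> simp [hp ω]

lemma sum_marg (X : Ω → α) : ∑ a, marg p X a = ∑ ω, p ω := by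
  unfold marg
  rw [Finset.sum_comm]
  simp

lemma marg_comp_eq_sum (f : α → β) (X : Ω → α) (b : β) :
    marg p (fun ω => f (X ω)) b = ∑ a with f a = b, marg p X a := by
  unfold marg
  rw [Finset.sum_comm]
  exact Finset.sum_congr rfl fun ω _ => by simp [Finset.mem_filter]

lemma marg_comp_of_injective {f : α → β} (hf : Function.Injective f) (X : Ω → α) (a : α) :
    marg p (fun ω => f (X ω)) (f a) = marg p X a := by
  simp [marg_comp_eq_sum, hf.eq_iff, Finset.filter_eq']

lemma marg_le_marg_comp {p : Ω → ℝ} (hp : ∀ ω, 0 ≤ p ω) (f : α → β) (X : Ω → α) (a : α) :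
    marg p X a ≤ marg p (fun ω => f (X ω)) (f a) := by
  rw [marg_comp_eq_sum p f X]
  exact Finset.single_le_sum (f := marg p X) (fun a _ => marg_nonneg hp X a) (by simp)

variable (X : Ω → α) (Y : Ω → β) (Z : Ω → γ)

lemma marg_snd_eq_sum (c : γ) : marg p Z c = ∑ a, marg p (fun ω => (X ω, Z ω)) (a, c) := by
  unfold marg
  rw [Finset.sum_comm]
  refine Finset.sum_congr rfl fun ω _ => ?_
  by_cases hz : Z ω = c <;> simp [hz]

lemma marg_left_eq_sum (a : α) (c : γ) :
    marg p (fun ω => (X ω, Z ω)) (a, c) =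
      ∑ b, marg p (fun ω => (X ω, Y ω, Z ω)) (a, b, c) := by
  unfold marg
  rw [Finset.sum_comm]
  refine Finset.sum_congr rfl fun ω _ => ?_
  by_cases hx : X ω = a <;> by_cases hz : Z ω = c <;> simp [hx, hz]

lemma marg_right_eq_sum (b : β) (c : γ) :
    marg p (fun ω => (Y ω, Z ω)) (b, c) =
      ∑ a, marg p (fun ω => (X ω, Y ω, Z ω)) (a, b, c) := by
  unfold marg
  rw [Finset.sum_comm]
  refine Finset.sum_congr rfl fun ω _ => ?_
  by_cases hy : Y ω = b <;> by_cases hz : Z ω = c <;> simp [hy, hz]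

lemma condIndep_of_marg_eq_mul {X : Ω → α} {Y : Ω → β} {Z : Ω → γ}
    (f : α → γ → ℝ) (g : β → γ → ℝ)
    (h : ∀ a b c, marg p (fun ω => (X ω, Y ω, Z ω)) (a, b, c) = f a c * g b c) :
    CondIndep p X Y Z := by
  intro a b c
  simp only [marg_left_eq_sum p X Y Z, marg_right_eq_sum p X Y Z, marg_snd_eq_sum p X Z, h,
    ← Finset.mul_sum, ← Finset.sum_mul]
  ring

end Marginals

section Entropy

variable (p : Ω → ℝ)

lemma ent_comp_eq_sum (f : α → β) (X : Ω → α) :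
    ent p (fun ω => f (X ω)) = ∑ a, -(marg p X a * log (marg p (fun ω => f (X ω)) (f a))) := by
  rw [ent, ← Finset.sum_fiberwise Finset.univ f]
  refine Finset.sum_congr rfl fun b _ => ?_
  rw [Finset.sum_congr rfl fun a ha => by rw [(Finset.mem_filter.1 ha).2],
    Finset.sum_neg_distrib, ← Finset.sum_mul, ← marg_comp_eq_sum p f X b, negMulLog, neg_mul]

lemma ent_comp_of_injective {f : α → β} (hf : Function.Injective f) (X : Ω → α) :
    ent p (fun ω => f (X ω)) = ent p X := by
  rw [ent_comp_eq_sum, ent]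
  exact Finset.sum_congr rfl fun a _ => by rw [marg_comp_of_injective p hf, negMulLog, neg_mul]

lemma ent_prod_comm (X : Ω → α) (Y : Ω → β) :
    ent p (fun ω => (X ω, Y ω)) = ent p (fun ω => (Y ω, X ω)) :=
  ent_comp_of_injective p Prod.swap_injective (fun ω => (Y ω, X ω))

lemma ent_const_unit (hp : ∑ ω, p ω = 1) : ent p (fun _ => ()) = 0 := by
  simp [ent, marg, hp]

lemma condMI_eq_sum (X : Ω → α) (Y : Ω → β) (Z : Ω → γ) :
    condMI p X Y Z = ∑ t : α × β × γ, marg p (fun ω => (X ω, Y ω, Z ω)) t *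
      (log (marg p (fun ω => (X ω, Y ω, Z ω)) t) + log (marg p Z t.2.2)
        - log (marg p (fun ω => (X ω, Z ω)) (t.1, t.2.2))
        - log (marg p (fun ω => (Y ω, Z ω)) (t.2.1, t.2.2))) := by
  set T : Ω → α × β × γ := fun ω => (X ω, Y ω, Z ω)
  have hXYZ : ent p (fun ω => ((X ω, Y ω), Z ω)) = ent p T :=
    ent_comp_of_injective p (Equiv.prodAssoc α β γ).symm.injective T
  have hT : ent p T = ∑ t, -(marg p T t * log (marg p T t)) := ent_comp_eq_sum p id T
  have hXZ : ent p (fun ω => (X ω, Z ω)) =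
      ∑ t, -(marg p T t * log (marg p (fun ω => (X ω, Z ω)) (t.1, t.2.2))) :=
    ent_comp_eq_sum p (fun t : α × β × γ => (t.1, t.2.2)) T
  have hYZ : ent p (fun ω => (Y ω, Z ω)) =
      ∑ t, -(marg p T t * log (marg p (fun ω => (Y ω, Z ω)) (t.2.1, t.2.2))) :=
    ent_comp_eq_sum p (fun t : α × β × γ => (t.2.1, t.2.2)) T
  have hZ : ent p Z = ∑ t, -(marg p T t * log (marg p Z t.2.2)) :=
    ent_comp_eq_sum p (fun t : α × β × γ => t.2.2) T
  simp only [condMI, condEnt]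
  rw [hXYZ, hT, hXZ, hYZ, hZ]
  simp only [← Finset.sum_sub_distrib, ← Finset.sum_add_distrib]
  exact Finset.sum_congr rfl fun t _ => by ring

end Entropy

section CondMI

lemma sub_le_mul_log_div {r s : ℝ} (hr : 0 < r) (hs : 0 < s) : r - s ≤ r * log (r / s) :=
  calc r - s = r * (1 - (r / s)⁻¹) := by field_simp
    _ ≤ r * log (r / s) :=
      mul_le_mul_of_nonneg_left (one_sub_inv_le_log_of_pos (div_pos hr hs)) hr.le

lemma sub_mul_div_le_mul_log {r u v w : ℝ} (hr : 0 ≤ r) (hu : r ≤ u) (hv : r ≤ v) (hw : r ≤ w) :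
    r - u * v / w ≤ r * (log r + log w - log u - log v) := by
  rcases hr.eq_or_lt with rfl | hr
  · simpa using div_nonneg (mul_nonneg hu hv) hw
  have hu : 0 < u := hr.trans_le hu
  have hv : 0 < v := hr.trans_le hv
  have hw : 0 < w := hr.trans_le hw
  calc r - u * v / w ≤ r * log (r / (u * v / w)) := sub_le_mul_log_div hr (by positivity)
    _ = _ := by
      rw [log_div hr.ne' (by positivity), log_div (by positivity) hw.ne', log_mul hu.ne' hv.ne']
      ring

lemma sum_marg_mul_marg_div_marg (p : Ω → ℝ) (X : Ω → α) (Y : Ω → β) (Z : Ω → γ) :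
    ∑ t : α × β × γ, marg p (fun ω => (X ω, Z ω)) (t.1, t.2.2) *
      marg p (fun ω => (Y ω, Z ω)) (t.2.1, t.2.2) / marg p Z t.2.2 = ∑ ω, p ω := by
  simp only [Fintype.sum_prod_type]
  simp_rw [Finset.sum_comm (γ := β)]
  rw [Finset.sum_comm, ← sum_marg p Z]
  refine Finset.sum_congr rfl fun c _ => ?_
  simp_rw [← Finset.sum_div]
  rw [← Finset.sum_mul_sum, ← marg_snd_eq_sum p X Z c, ← marg_snd_eq_sum p Y Z c,
    mul_self_div_self]

theorem condMI_nonneg {p : Ω → ℝ} (hp : ∀ ω, 0 ≤ p ω) (X : Ω → α) (Y : Ω → β) (Z : Ω → γ) :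
    0 ≤ condMI p X Y Z := by
  rw [condMI_eq_sum]
  calc (0 : ℝ) = ∑ t : α × β × γ, (marg p (fun ω => (X ω, Y ω, Z ω)) t -
        marg p (fun ω => (X ω, Z ω)) (t.1, t.2.2) *
          marg p (fun ω => (Y ω, Z ω)) (t.2.1, t.2.2) / marg p Z t.2.2) := by
        rw [Finset.sum_sub_distrib, sum_marg, sum_marg_mul_marg_div_marg, sub_self]
    _ ≤ _ := Finset.sum_le_sum fun t _ => sub_mul_div_le_mul_log (marg_nonneg hp _ t)
        (marg_le_marg_comp hp (fun t : α × β × γ => (t.1, t.2.2)) _ t)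
        (marg_le_marg_comp hp (fun t : α × β × γ => (t.2.1, t.2.2)) _ t)
        (marg_le_marg_comp hp (fun t : α × β × γ => t.2.2) _ t)

theorem condMI_eq_zero_of_condIndep {p : Ω → ℝ} {X : Ω → α} {Y : Ω → β} {Z : Ω → γ}
    (hp : ∀ ω, 0 ≤ p ω) (h : CondIndep p X Y Z) : condMI p X Y Z = 0 := by
  rw [condMI_eq_sum]
  refine Finset.sum_eq_zero fun ⟨a, b, c⟩ _ => ?_
  rcases (marg_nonneg hp (fun ω => (X ω, Y ω, Z ω)) (a, b, c)).eq_or_lt with h0 | hJ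
  · rw [← h0, zero_mul]
  have hXZ : 0 < marg p (fun ω => (X ω, Z ω)) (a, c) :=
    hJ.trans_le (marg_le_marg_comp hp (fun t : α × β × γ => (t.1, t.2.2)) _ (a, b, c))
  have hYZ : 0 < marg p (fun ω => (Y ω, Z ω)) (b, c) :=
    hJ.trans_le (marg_le_marg_comp hp (fun t : α × β × γ => (t.2.1, t.2.2)) _ (a, b, c))
  have hZ : 0 < marg p Z c :=
    hJ.trans_le (marg_le_marg_comp hp (fun t : α × β × γ => t.2.2) _ (a, b, c))
  have hlog := congrArg log (h a b c)
  rw [log_mul hXZ.ne' hYZ.ne', log_mul hJ.ne' hZ.ne'] at hlog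
  rw [← hlog]
  ring

lemma mi_eq_condMI_unit (p : Ω → ℝ) (hp : ∑ ω, p ω = 1) (X : Ω → α) (Y : Ω → β) :
    mi p X Y = condMI p X Y (fun _ => ()) := by
  simp only [mi, condMI, condEnt]
  rw [ent_comp_of_injective p (Prod.mk_left_injective ()) X,
    ent_comp_of_injective p (Prod.mk_left_injective ()) Y,
    ent_comp_of_injective p (Prod.mk_left_injective ()) (fun ω => (X ω, Y ω)),
    ent_const_unit p hp]
  ring

theorem mi_nonneg {p : Ω → ℝ} (hp : IsProb p) (X : Ω → α) (Y : Ω → β) : 0 ≤ mi p X Y :=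
  mi_eq_condMI_unit p hp.2 X Y ▸ condMI_nonneg hp.1 X Y _

end CondMI

section Identities

variable (p : Ω → ℝ)

lemma condMI_sub_mi_comm (X : Ω → α) (Y : Ω → β) (Z : Ω → γ) :
    condMI p X Y Z - mi p X Y = condMI p Z Y X - mi p Z Y := by
  have hXYZ : ent p (fun ω => ((X ω, Y ω), Z ω)) = ent p (fun ω => ((Z ω, Y ω), X ω)) :=
    ent_comp_of_injective p (f := fun t : (γ × β) × α => ((t.2, t.1.2), t.1.1))
      (Function.LeftInverse.injective (g := fun t => ((t.2, t.1.2), t.1.1)) fun _ => rfl)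
      (fun ω => ((Z ω, Y ω), X ω))
  simp only [condMI, condEnt, mi]
  rw [ent_prod_comm p X Z, ent_prod_comm p Y Z, ent_prod_comm p Y X, hXYZ]
  ring

lemma condMI_sub_condMI_comm (X : Ω → α) (Y : Ω → β) (A : Ω → γ) (Z : Ω → δ) :
    condMI p X Y (fun ω => (A ω, Z ω)) - condMI p X Y A
      = condMI p Z Y (fun ω => (A ω, X ω)) - condMI p Z Y A := by
  have hXAZ : ent p (fun ω => (X ω, A ω, Z ω)) = ent p (fun ω => (Z ω, A ω, X ω)) :=
    ent_comp_of_injective p (f := fun t : δ × γ × α => (t.2.2, t.2.1, t.1))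
      (Function.LeftInverse.injective (g := fun t => (t.2.2, t.2.1, t.1)) fun _ => rfl)
      (fun ω => (Z ω, A ω, X ω))
  have hYAZ : ent p (fun ω => (Y ω, A ω, Z ω)) = ent p (fun ω => ((Z ω, Y ω), A ω)) :=
    ent_comp_of_injective p (f := fun t : (δ × β) × γ => (t.1.2, t.2, t.1.1))
      (Function.LeftInverse.injective (g := fun t => ((t.2.2, t.1), t.2.1)) fun _ => rfl)
      (fun ω => ((Z ω, Y ω), A ω))
  have hYAX : ent p (fun ω => (Y ω, A ω, X ω)) = ent p (fun ω => ((X ω, Y ω), A ω)) :=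
    ent_comp_of_injective p (f := fun t : (α × β) × γ => (t.1.2, t.2, t.1.1))
      (Function.LeftInverse.injective (g := fun t => ((t.2.2, t.1), t.2.1)) fun _ => rfl)
      (fun ω => ((X ω, Y ω), A ω))
  have hXYAZ : ent p (fun ω => ((X ω, Y ω), A ω, Z ω)) =
      ent p (fun ω => ((Z ω, Y ω), A ω, X ω)) :=
    ent_comp_of_injective p (f := fun t : (δ × β) × γ × α => ((t.2.2, t.1.2), t.2.1, t.1.1))
      (Function.LeftInverse.injective
        (g := fun t => ((t.2.2, t.1.2), t.2.1, t.1.1)) fun _ => rfl)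
      (fun ω => ((Z ω, Y ω), A ω, X ω))
  simp only [condMI, condEnt]
  rw [hXAZ, hYAZ, hYAX, hXYAZ, ent_prod_comm p A Z, ent_prod_comm p A X]
  ring

lemma condMI_prod_right (X : Ω → α) (Y : Ω → β) (Z : Ω → γ) (W : Ω → δ) :
    condMI p X (fun ω => (Y ω, Z ω)) W
      = condMI p X Z W + condMI p X Y (fun ω => (Z ω, W ω)) := by
  have hXZW : ent p (fun ω => (X ω, Z ω, W ω)) = ent p (fun ω => ((X ω, Z ω), W ω)) :=
    ent_comp_of_injective p (Equiv.prodAssoc α γ δ).injective (fun ω => ((X ω, Z ω), W ω))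
  have hYZW : ent p (fun ω => (Y ω, Z ω, W ω)) = ent p (fun ω => ((Y ω, Z ω), W ω)) :=
    ent_comp_of_injective p (Equiv.prodAssoc β γ δ).injective (fun ω => ((Y ω, Z ω), W ω))
  have hXYZW : ent p (fun ω => ((X ω, Y ω), Z ω, W ω)) =
      ent p (fun ω => ((X ω, Y ω, Z ω), W ω)) :=
    ent_comp_of_injective p (f := fun t : (α × β × γ) × δ => ((t.1.1, t.1.2.1), t.1.2.2, t.2))
      (Function.LeftInverse.injective
        (g := fun t => ((t.1.1, t.1.2, t.2.1), t.2.2)) fun _ => rfl)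
      (fun ω => ((X ω, Y ω, Z ω), W ω))
  simp only [condMI, condEnt]
  rw [hXZW, hYZW, hXYZW]
  ring

lemma condMI_prod_comm_right (X : Ω → α) (Y : Ω → β) (Z : Ω → γ) (W : Ω → δ) :
    condMI p X (fun ω => (Y ω, Z ω)) W = condMI p X (fun ω => (Z ω, Y ω)) W := by
  have hYZW : ent p (fun ω => ((Y ω, Z ω), W ω)) = ent p (fun ω => ((Z ω, Y ω), W ω)) :=
    ent_comp_of_injective p (Equiv.prodCongr (Equiv.prodComm γ β) (Equiv.refl δ)).injective
      (fun ω => ((Z ω, Y ω), W ω))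
  have hXYZW : ent p (fun ω => ((X ω, Y ω, Z ω), W ω)) =
      ent p (fun ω => ((X ω, Z ω, Y ω), W ω)) :=
    ent_comp_of_injective p (f := fun t : (α × γ × β) × δ => ((t.1.1, t.1.2.2, t.1.2.1), t.2))
      (Function.LeftInverse.injective
        (g := fun t => ((t.1.1, t.1.2.2, t.1.2.1), t.2)) fun _ => rfl)
      (fun ω => ((X ω, Z ω, Y ω), W ω))
  simp only [condMI, condEnt]
  rw [hYZW, hXYZW]

end Identities

theorem condMI_sub_condMI_le_of_condIndep {p : Ω → ℝ} {Q : Ω → γ} {A : Ω → α} {E : Ω → β}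
    {X : Ω → δ} {V : Ω → ε} (hp : IsProb p) (hQEA : CondIndep p Q E A)
    (hQV : CondIndep p Q V (fun ω => (E ω, A ω, X ω))) :
    condMI p (fun ω => (A ω, X ω)) V Q - condMI p X E (fun ω => (A ω, Q ω))
      ≤ mi p (fun ω => (A ω, X ω)) V - condMI p X E A := by
  have hW := condMI_sub_mi_comm p (fun ω => (A ω, X ω)) V Q
  have hE := condMI_sub_condMI_comm p X E A Q
  have hVE := condMI_prod_right p Q V E (fun ω => (A ω, X ω))
  have hEV := condMI_prod_right p Q E V (fun ω => (A ω, X ω))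
  have hswap := condMI_prod_comm_right p Q V E (fun ω => (A ω, X ω))
  have hQE0 := condMI_eq_zero_of_condIndep hp.1 hQEA
  have hQV0 := condMI_eq_zero_of_condIndep hp.1 hQV
  have hmi := mi_nonneg hp Q V
  have hslack := condMI_nonneg hp.1 Q E (fun ω => (V ω, A ω, X ω))
  linarith

end IT

section TimeSharingModel

variable {Qt At Et Dt Xt Yt : Type} [Fintype Qt] [Fintype At] [Fintype Et] [Fintype Dt]
  [Fintype Xt] [Fintype Yt] {p : Qt × At × Et × Dt × Xt × Yt → ℝ} {PQ : Qt → ℝ}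
  {PA : At → Qt → ℝ} {PS : Et × Dt → At → ℝ} {PX : Xt → At → Et → Qt → ℝ}
  {PY : Yt → Xt → Et → Dt → ℝ}

lemma timeSharing_isProb
    (hPQ0 : ∀ q, 0 ≤ PQ q) (hPQ1 : ∑ q, PQ q = 1)
    (hPA0 : ∀ a q, 0 ≤ PA a q) (hPA1 : ∀ q, ∑ a, PA a q = 1)
    (hPS0 : ∀ s a, 0 ≤ PS s a) (hPS1 : ∀ a, ∑ s, PS s a = 1)
    (hPX0 : ∀ x a e q, 0 ≤ PX x a e q) (hPX1 : ∀ a e q, ∑ x, PX x a e q = 1)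
    (hPY0 : ∀ y x e d, 0 ≤ PY y x e d) (hPY1 : ∀ x e d, ∑ y, PY y x e d = 1)
    (hfac : ∀ q a e d x y,
      p (q, a, e, d, x, y) = PQ q * PA a q * PS (e, d) a * PX x a e q * PY y x e d) :
    IT.IsProb p := by
  refine ⟨fun ⟨q, a, e, d, x, y⟩ => ?_, ?_⟩
  · rw [hfac]
    exact mul_nonneg (mul_nonneg (mul_nonneg (mul_nonneg (hPQ0 q) (hPA0 a q)) (hPS0 (e, d) a))
      (hPX0 x a e q)) (hPY0 y x e d)
  · simp only [Fintype.sum_prod_type] at hPS1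
    simp [Fintype.sum_prod_type, hfac, ← Finset.mul_sum, hPY1, hPX1, hPS1, hPA1, hPQ1]

variable [DecidableEq Qt] [DecidableEq At] [DecidableEq Et] [DecidableEq Dt] [DecidableEq Xt]
  [DecidableEq Yt]

lemma timeSharing_marg_state (q : Qt) (e : Et) (a : At) :
    IT.marg p (fun ω => (ω.1, ω.2.2.1, ω.2.1)) (q, e, a) =
      ∑ d, ∑ x, ∑ y, p (q, a, e, d, x, y) := by
  refine (IT.marg_left_eq_sum p (fun ω => ω.1) (fun ω => (ω.2.2.2.1, ω.2.2.2.2.1, ω.2.2.2.2.2))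
    (fun ω => (ω.2.2.1, ω.2.1)) q (e, a)).trans ?_
  simp [IT.marg, Fintype.sum_prod_type, ite_and]

lemma timeSharing_condIndep_state (hPX1 : ∀ a e q, ∑ x, PX x a e q = 1)
    (hPY1 : ∀ x e d, ∑ y, PY y x e d = 1)
    (hfac : ∀ q a e d x y,
      p (q, a, e, d, x, y) = PQ q * PA a q * PS (e, d) a * PX x a e q * PY y x e d) :
    IT.CondIndep p (fun ω => ω.1) (fun ω => ω.2.2.1) (fun ω => ω.2.1) :=
  IT.condIndep_of_marg_eq_mul p (fun q a => PQ q * PA a q) (fun e a => ∑ d, PS (e, d) a)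
    fun q e a => by simp [timeSharing_marg_state, hfac, ← Finset.mul_sum, hPY1, hPX1]

lemma timeSharing_condIndep_channel
    (hfac : ∀ q a e d x y,
      p (q, a, e, d, x, y) = PQ q * PA a q * PS (e, d) a * PX x a e q * PY y x e d) :
    IT.CondIndep p (fun ω => ω.1) (fun ω => (ω.2.2.2.2.2, ω.2.2.2.1))
      (fun ω => (ω.2.2.1, ω.2.1, ω.2.2.2.2.1)) :=
  IT.condIndep_of_marg_eq_mul p (fun q ⟨e, a, x⟩ => PQ q * PA a q * PX x a e q)
    (fun ⟨y, d⟩ ⟨e, a, x⟩ => PS (e, d) a * PY y x e d) fun q ⟨y, d⟩ ⟨e, a, x⟩ => by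
      simp [IT.marg, Fintype.sum_prod_type, ite_and, hfac, mul_comm, mul_left_comm, mul_assoc]

end TimeSharingModel

section TimeSharing
variable {Qt At Et Dt Xt Yt : Type}
  [Fintype Qt] [DecidableEq Qt] [Fintype At] [DecidableEq At]
  [Fintype Et] [DecidableEq Et] [Fintype Dt] [DecidableEq Dt]
  [Fintype Xt] [DecidableEq Xt] [Fintype Yt] [DecidableEq Yt]

/-- `I(A,X; Y,S_d | Q) − I(X; S_e | A,Q) ≤ I(A,X; Y,S_d) − I(X; S_e | A)`. -/
theorem stmt16
    (p : Qt × At × Et × Dt × Xt × Yt → ℝ)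
    (PQ : Qt → ℝ) (PA : At → Qt → ℝ) (PS : Et × Dt → At → ℝ)
    (PX : Xt → At → Et → Qt → ℝ) (PY : Yt → Xt → Et → Dt → ℝ)
    (hPQ0 : ∀ q, 0 ≤ PQ q) (hPQ1 : ∑ q, PQ q = 1)
    (hPA0 : ∀ a q, 0 ≤ PA a q) (hPA1 : ∀ q, ∑ a, PA a q = 1)
    (hPS0 : ∀ s a, 0 ≤ PS s a) (hPS1 : ∀ a, ∑ s, PS s a = 1)
    (hPX0 : ∀ x a e q, 0 ≤ PX x a e q) (hPX1 : ∀ a e q, ∑ x, PX x a e q = 1)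
    (hPY0 : ∀ y x e d, 0 ≤ PY y x e d) (hPY1 : ∀ x e d, ∑ y, PY y x e d = 1)
    (hfac : ∀ q a e d x y,
      p (q, a, e, d, x, y) = PQ q * PA a q * PS (e, d) a * PX x a e q * PY y x e d) :
    IT.condMI p (fun ω => (ω.2.1, ω.2.2.2.2.1)) (fun ω => (ω.2.2.2.2.2, ω.2.2.2.1))
        (fun ω => ω.1)
      - IT.condMI p (fun ω => ω.2.2.2.2.1) (fun ω => ω.2.2.1) (fun ω => (ω.2.1, ω.1))
    ≤ IT.mi p (fun ω => (ω.2.1, ω.2.2.2.2.1)) (fun ω => (ω.2.2.2.2.2, ω.2.2.2.1))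
      - IT.condMI p (fun ω => ω.2.2.2.2.1) (fun ω => ω.2.2.1) (fun ω => ω.2.1) :=
  IT.condMI_sub_condMI_le_of_condIndep
    (timeSharing_isProb hPQ0 hPQ1 hPA0 hPA1 hPS0 hPS1 hPX0 hPX1 hPY0 hPY1 hfac)
    (timeSharing_condIndep_state hPX1 hPY1 hfac) (timeSharing_condIndep_channel hfac)

end TimeSharing
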